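/- arXiv:0910.2085 — 2 statements merged into one kernel-verified Lean document; each statement's English description precedes it below -/
import Mathlib

section
/- For all i, j and integers α ≥ 0, t ≥ 0, the operator identity Σ_{s≥0} ∂^t( f · p_{i,α,t}(g) ) = Σ_{t≥0} ∂^t(f) · ∂_{i,α+t}(g) holds for all f, g ∈ 𝒜; equivalently, Σ_{t≥0} C(t+s,s) ∂^t ∘ p_{i,α,s+t} = ∂_{i,α+s} as operators on 𝒜. -/
/-!
With `v m = ∂_{i,α+m} g`, the momentum `p_s = Σ_r (-1)^r C(r+s,s) ∂^r v_{s+r}` is an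
alternating binomial transform of `v`. Substituting it into `Σ_t C(t+s,s) ∂^t p_{s+t}` and
collecting terms by `m = t + r`, the coefficient of `∂^m v_{s+m}` is
`C(m+s,s) Σ_j (-1)^(m-j) C(m,j) = C(m+s,s) 0^m`, so only `v_s` survives. The first identity
follows by expanding `∂^t (f · p_t)` with the iterated Leibniz rule and applying the second one
to the coefficient of each `∂^k f`. All truncations are harmless because `v m = 0` for
`m ≥ vbound g`.
-/

open MvPolynomial

/-- The differential polynomial algebra `𝒜` in the variables `u^{i,s}`,
`1 ≤ i ≤ n`, `s ≥ 0`. -/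
abbrev DP (n : ℕ) : Type := MvPolynomial (Fin n × ℕ) ℝ

/-- The total derivative `∂ = Σ u^{i,s+1} ∂_{i,s}` (on each differential
polynomial only finitely many terms act nontrivially). -/
noncomputable def totalDer {n : ℕ} (f : DP n) : DP n :=
  ∑ v ∈ f.vars, X (v.1, v.2 + 1) * pderiv v f

/-- A bound such that `∂_{i,k} f = 0` for all `k ≥ vbound f`. -/
noncomputable def vbound {n : ℕ} (f : DP n) : ℕ := (f.vars.sup (fun v => v.2)) + 1

/-- The higher generalized momentum operator
`p_{i,α,s} = Σ_{t≥0} (-1)^t C(t+s,s) ∂^t ∘ ∂_{i,α+s+t}`; the sum is finite on each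
differential polynomial, and is truncated at a sufficiently large bound. -/
noncomputable def pmom {n : ℕ} (i : Fin n) (α s : ℕ) (f : DP n) : DP n :=
  ∑ t ∈ Finset.range (vbound f),
    ((-1 : ℝ) ^ t * (Nat.choose (t + s) s : ℝ)) • totalDer^[t] (pderiv (i, α + s + t) f)

/-- The higher energy operator `E_s = Σ_{α≥1} u^{i,α} p_{i,α,s}`. -/
noncomputable def Eop {n : ℕ} (s : ℕ) (f : DP n) : DP n :=
  ∑ i : Fin n, ∑ α ∈ Finset.Icc 1 (vbound f), X (i, α) * pmom i α s f

/-- The energy operator `E = E₀ - 1`. -/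
noncomputable def Ener {n : ℕ} (f : DP n) : DP n := Eop 0 f - f

open Finset

section BinomialInversion

variable {R M : Type*} [CommRing R] [AddCommGroup M] [Module R M]

theorem sum_range_choose_mul_neg_one_pow_mul_choose (s m : ℕ) :
    ∑ j ∈ range (m + 1), ((j + s).choose s : R) * ((-1) ^ (m - j) * ((m + s).choose (s + j) : R))
      = 0 ^ m := by
  have hchoose : ∀ j ∈ range (m + 1),
      ((j + s).choose s : R) * ((-1) ^ (m - j) * ((m + s).choose (s + j) : R)) =
        (m + s).choose s * (1 ^ j * (-1) ^ (m - j) * m.choose j) := by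
    intro j hj
    have h := Nat.choose_mul (n := m + s) (k := s + j) (s := s) (Nat.le_add_right s j)
    rw [Nat.add_sub_cancel, Nat.add_sub_cancel_left] at h
    have hR := congrArg (Nat.cast : ℕ → R) h
    push_cast at hR
    rw [one_pow, one_mul, add_comm j s]
    linear_combination (-1 : R) ^ (m - j) * hR
  rw [sum_congr rfl hchoose, ← mul_sum, ← add_pow, add_neg_cancel]
  rcases m with _ | m <;> simp

theorem sum_range_sum_range_eq_sum_range_sum_range_sub {B : ℕ} (F : ℕ → ℕ → M)
    (hF : ∀ t r, B ≤ t + r → F t r = 0) :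
    ∑ t ∈ range B, ∑ r ∈ range B, F t r = ∑ m ∈ range B, ∑ j ∈ range (m + 1), F j (m - j) := by
  rw [sum_range_diag_flip]
  refine sum_congr rfl fun t _ => (sum_subset (range_subset_range.mpr (Nat.sub_le B t)) ?_).symm
  intro r _ hr
  exact hF t r (by simp only [mem_range, not_lt] at hr; omega)

def momentum (D : Module.End R M) (B : ℕ) (v : ℕ → M) (s : ℕ) : M :=
  ∑ r ∈ range B, ((-1) ^ r * ((r + s).choose s : R)) • (D ^ r) (v (s + r))

variable (D : Module.End R M) {B : ℕ} {v : ℕ → M}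

theorem momentum_eq_zero (hv : ∀ m, B ≤ m → v m = 0) {s : ℕ} (hs : B ≤ s) :
    momentum D B v s = 0 :=
  sum_eq_zero fun r _ => by rw [hv (s + r) (by omega), map_zero, smul_zero]

theorem sum_range_choose_smul_pow_momentum (hv : ∀ m, B ≤ m → v m = 0) (s : ℕ) :
    ∑ t ∈ range B, ((t + s).choose s : R) • (D ^ t) (momentum D B v (s + t)) = v s := by
  set G : ℕ → M := fun m => (D ^ m) (v (s + m)) with hG
  have hG_zero : ∀ m, B ≤ m → G m = 0 := fun m hm => by
    simp only [hG, hv (s + m) (by omega), map_zero]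
  calc ∑ t ∈ range B, ((t + s).choose s : R) • (D ^ t) (momentum D B v (s + t))
      = ∑ t ∈ range B, ∑ r ∈ range B,
          (((t + s).choose s : R) * ((-1) ^ r * ((r + (s + t)).choose (s + t) : R))) • G (t + r) := by
        simp only [momentum, map_sum, map_smul, smul_sum, smul_smul, ← Module.End.mul_apply,
          ← pow_add, hG, add_assoc]
    _ = ∑ m ∈ range B, ∑ j ∈ range (m + 1),
          (((j + s).choose s : R) * ((-1) ^ (m - j) * ((m + s).choose (s + j) : R))) • G m := by
        rw [sum_range_sum_range_eq_sum_range_sum_range_sub]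
        · refine sum_congr rfl fun m _ => sum_congr rfl fun j hj => ?_
          have hjm : j ≤ m := Nat.lt_succ_iff.mp (mem_range.mp hj)
          rw [show m - j + (s + j) = m + s by omega, Nat.add_sub_cancel' hjm]
        · intro t r h
          rw [hG_zero _ h, smul_zero]
    _ = ∑ m ∈ range B, (0 : R) ^ m • G m := by
        simp only [← sum_smul, sum_range_choose_mul_neg_one_pow_mul_choose]
    _ = v s := by
        rw [sum_eq_single 0 (fun m _ hm => by rw [zero_pow hm, zero_smul])
          (fun h => by rw [hG_zero 0 (by simpa using h), smul_zero])]
        simp [hG]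

end BinomialInversion

section Leibniz

variable {R A : Type*} [CommRing R] [CommRing A] [Algebra R A]

theorem Derivation.iterate_map_mul (D : Derivation R A A) (n : ℕ) (a b : A) :
    D^[n] (a * b) = ∑ k ∈ range (n + 1), n.choose k • (D^[k] a * D^[n - k] b) := by
  rw [← Nat.sum_antidiagonal_eq_sum_range_succ (fun i j => n.choose i • (D^[i] a * D^[j] b))]
  induction n with
  | zero => simp
  | succ n ih =>
    rw [sum_antidiagonal_choose_succ_nsmul (fun i j => D^[i] a * D^[j] b) n]
    simp only [Function.iterate_succ_apply', ih, map_sum, map_nsmul, D.leibniz, smul_eq_mul,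
      nsmul_add, sum_add_distrib]
    refine congrArg₂ (· + ·) rfl (sum_congr rfl fun ij hij => ?_)
    rw [n.choose_symm_of_eq_add (mem_antidiagonal.1 hij).symm, mul_comm]

variable (D : Derivation R A A) {B : ℕ} {v : ℕ → A}

theorem sum_range_iterate_mul_momentum (hv : ∀ m, B ≤ m → v m = 0) (f : A) :
    ∑ t ∈ range B, D^[t] (f * momentum (D : Module.End R A) B v t) =
      ∑ t ∈ range B, D^[t] f * v t := by
  let P := momentum (D : Module.End R A) B v
  calc ∑ t ∈ range B, D^[t] (f * P t)
      = ∑ t ∈ range B, ∑ k ∈ range (t + 1), t.choose k • (D^[k] f * D^[t - k] (P t)) := by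
        simp only [D.iterate_map_mul]
    _ = ∑ k ∈ range B, ∑ j ∈ range (B - k),
          (k + j).choose k • (D^[k] f * D^[j] (P (k + j))) := by
        rw [← sum_range_diag_flip]
        refine sum_congr rfl fun t _ => sum_congr rfl fun k hk => ?_
        rw [Nat.add_sub_cancel' (Nat.lt_succ_iff.mp (mem_range.mp hk))]
    _ = ∑ k ∈ range B, D^[k] f *
          ∑ j ∈ range B, ((j + k).choose k : R) • ((D : Module.End R A) ^ j) (P (k + j)) := by
        refine sum_congr rfl fun k _ => ?_
        rw [mul_sum, ← sum_subset (range_subset_range.mpr (Nat.sub_le B k))]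
        · refine sum_congr rfl fun j _ => ?_
          rw [add_comm j k, Nat.cast_smul_eq_nsmul, mul_smul_comm, Module.End.pow_apply,
            Derivation.coeFn_coe]
        · intro j _ hj
          have hP : P (k + j) = 0 :=
            momentum_eq_zero _ hv (by simp only [mem_range, not_lt] at hj; omega)
          rw [hP, map_zero, smul_zero, mul_zero]
    _ = ∑ t ∈ range B, D^[t] f * v t :=
        sum_congr rfl fun k _ => by rw [sum_range_choose_smul_pow_momentum _ hv]

end Leibniz

noncomputable def totalDerivation (n : ℕ) : Derivation ℝ (DP n) (DP n) :=
  mkDerivation ℝ fun v => X (v.1, v.2 + 1)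

theorem totalDer_eq_totalDerivation {n : ℕ} : (totalDer : DP n → DP n) = totalDerivation n := by
  funext f
  let D : Derivation ℝ (DP n) (DP n) := ∑ v ∈ f.vars, (X (v.1, v.2 + 1) : DP n) • pderiv v
  have hD : ∀ g, D g = ∑ v ∈ f.vars, X (v.1, v.2 + 1) * pderiv v g := fun g => by
    rw [← Derivation.coeFnAddMonoidHom_apply, map_sum, Finset.sum_apply]
    rfl
  refine (hD f).symm.trans (derivation_eq_of_forall_mem_vars fun w hw => ?_)
  rw [hD, sum_eq_single w (fun v _ hv => by rw [pderiv_X_of_ne hv.symm, mul_zero])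
    (fun h => absurd hw h), pderiv_X_self, mul_one, totalDerivation, mkDerivation_X]

theorem totalDer_iterate {n : ℕ} (t : ℕ) (f : DP n) :
    totalDer^[t] f = ((totalDerivation n : Module.End ℝ (DP n)) ^ t) f := by
  rw [Module.End.pow_apply, Derivation.coeFn_coe, totalDer_eq_totalDerivation]

theorem pderiv_eq_zero_of_vbound_le {n : ℕ} (g : DP n) (j : Fin n) {m : ℕ} (hm : vbound g ≤ m) :
    pderiv (j, m) g = 0 := by
  refine pderiv_eq_zero_of_notMem_vars fun hmem => ?_
  have := Finset.le_sup (f := fun v : Fin n × ℕ => v.2) hmem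
  rw [vbound] at hm
  omega

theorem pmom_eq_momentum {n : ℕ} (i : Fin n) (α s : ℕ) (g : DP n) :
    pmom i α s g = momentum (totalDerivation n : Module.End ℝ (DP n)) (vbound g)
      (fun m => pderiv (i, α + m) g) s :=
  sum_congr rfl fun r _ => by rw [totalDer_iterate, add_assoc]

/-- `Σ_t ∂^t(f · p_{i,α,t}(g)) = Σ_t ∂^t(f)·∂_{i,α+t}(g)`; equivalently
`Σ_t C(t+s,s) ∂^t ∘ p_{i,α,s+t} = ∂_{i,α+s}` (all sums finite and truncated at a
sufficiently large bound). -/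
theorem stmt18 {n : ℕ} (i : Fin n) (α s : ℕ) :
    (∀ f g : DP n,
      (∑ t ∈ Finset.range (vbound g), totalDer^[t] (f * pmom i α t g)) =
      (∑ t ∈ Finset.range (vbound g), totalDer^[t] f * pderiv (i, α + t) g)) ∧
    (∀ g : DP n,
      (∑ t ∈ Finset.range (vbound g),
        (Nat.choose (t + s) s : ℝ) • totalDer^[t] (pmom i α (s + t) g)) =
      pderiv (i, α + s) g) := by
  refine ⟨fun f g => ?_, fun g => ?_⟩
  · simp only [pmom_eq_momentum, totalDer_eq_totalDerivation]
    exact sum_range_iterate_mul_momentum _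
      (fun m hm => pderiv_eq_zero_of_vbound_le g i (by omega)) f
  · simp only [pmom_eq_momentum, totalDer_iterate]
    exact sum_range_choose_smul_pow_momentum _
      (fun m hm => pderiv_eq_zero_of_vbound_le g i (by omega)) s
end

section
/- The energy operator satisfies E ∘ δ_j = ∂_{j,0} ∘ E and, for t ≥ 1, E_t ∘ δ_j = (−1)^t ∂_{j,t} ∘ E as operators on the differential polynomial algebra 𝒜. -/
/-!
The total derivative `∂` is a derivation with `[∂_{i,0}, ∂] = 0` and
`[∂_{i,k+1}, ∂] = ∂_{i,k}`, and the momenta obey `p_{i,α,0} = ∂_{i,α} - ∂ p_{i,α+1,0}` and,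
by Pascal's rule, `p_{i,α,s+1} = p_{i,α+1,s} - ∂ p_{i,α+1,s+1}`. From these, induction on `s`
and descending induction on `β` (everything vanishes for large `β`) give
`p_{i,β+1,s} ∘ δ_j = (-1)^s (∂_{j,s} p_{i,β+1,0} - ∂_{i,β} p_{j,s+1,0})`.
Multiplying by `u^{i,β+1}` and summing, the second terms assemble into `∂ p_{j,s+1,0}`, while
the Leibniz rule for `∂_{j,s} E₀` produces the extra term `p_{j,s,0}` when `s ≥ 1`; the
recursion for `p_{j,s,0}` then closes both identities.
-/

open MvPolynomial

namespace MvPolynomial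

variable {R σ : Type*}

theorem pderiv_pderiv_comm [CommRing R] (v w : σ) (f : MvPolynomial σ R) :
    pderiv v (pderiv w f) = pderiv w (pderiv v f) := by
  classical
  have h : ⁅pderiv (R := R) v, pderiv (R := R) w⁆ = 0 := by
    refine derivation_ext fun u => ?_
    simp [Derivation.commutator_apply, pderiv_X, Pi.single_apply, apply_ite]
  rw [← sub_eq_zero, ← Derivation.commutator_apply (R := R), h, Derivation.zero_apply]

theorem derivation_eq_sum_pderiv_mul [CommSemiring R]
    (D : Derivation R (MvPolynomial σ R) (MvPolynomial σ R)) {f : MvPolynomial σ R} {S : Finset σ}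
    (hS : f.vars ⊆ S) :
    D f = ∑ v ∈ S, pderiv v f * D (X v) := by
  classical
  let D' : Derivation R (MvPolynomial σ R) (MvPolynomial σ R) := ∑ v ∈ S, D (X v) • pderiv v
  have hD' : ∀ g, D' g = ∑ v ∈ S, pderiv v g * D (X v) := by
    intro g
    simp only [D', ← Derivation.coeFnAddMonoidHom_apply, map_sum, Finset.sum_apply]
    simp [mul_comm]
  rw [← hD']
  refine derivation_eq_of_forall_mem_vars fun u hu => ?_
  rw [hD', Finset.sum_eq_single u]
  · simp
  · intro v _ hvu
    simp [pderiv_X_of_ne hvu.symm]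
  · exact fun hu' => absurd (hS hu) hu'

end MvPolynomial

section TotalDerivative

variable {n : ℕ}

theorem lt_vbound_of_mem_vars {f : DP n} {v : Fin n × ℕ} (h : v ∈ f.vars) : v.2 < vbound f :=
  Nat.lt_succ_of_le (Finset.le_sup (f := fun v => v.2) h)

theorem pderiv_eq_zero_of_vbound_le_s19 {f : DP n} {i : Fin n} {k : ℕ} (h : vbound f ≤ k) :
    pderiv (i, k) f = 0 :=
  pderiv_eq_zero_of_notMem_vars fun hv => (lt_vbound_of_mem_vars hv).not_ge h

variable (n) in
noncomputable def totalDeriv : Derivation ℝ (DP n) (DP n) :=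
  mkDerivation ℝ fun v => X (v.1, v.2 + 1)

theorem totalDeriv_eq_sum {f : DP n} {S : Finset (Fin n × ℕ)} (hS : f.vars ⊆ S) :
    totalDeriv n f = ∑ v ∈ S, X (v.1, v.2 + 1) * pderiv v f := by
  rw [derivation_eq_sum_pderiv_mul _ hS]
  simp [totalDeriv, mul_comm]

theorem coe_totalDeriv : ⇑(totalDeriv n) = totalDer :=
  funext fun _ => totalDeriv_eq_sum subset_rfl

theorem totalDeriv_pderiv_zero (i : Fin n) (g : DP n) :
    totalDeriv n (pderiv (i, 0) g) = pderiv (i, 0) (totalDeriv n g) := by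
  classical
  have h : ⁅pderiv (R := ℝ) (i, 0), totalDeriv n⁆ = 0 := by
    refine derivation_ext fun v => ?_
    simp [Derivation.commutator_apply, totalDeriv, pderiv_X, Pi.single_apply, apply_ite]
  rw [eq_comm, ← sub_eq_zero, ← Derivation.commutator_apply (R := ℝ), h,
    Derivation.zero_apply]

theorem totalDeriv_pderiv_succ (i : Fin n) (k : ℕ) (g : DP n) :
    totalDeriv n (pderiv (i, k + 1) g) = pderiv (i, k + 1) (totalDeriv n g) - pderiv (i, k) g := by
  classical
  have h : ⁅pderiv (R := ℝ) (i, k + 1), totalDeriv n⁆ = pderiv (i, k) := by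
    refine derivation_ext fun v => ?_
    simp [Derivation.commutator_apply, totalDeriv, pderiv_X, Pi.single_apply, apply_ite,
      Prod.ext_iff]
  rw [eq_sub_iff_add_eq, ← eq_sub_iff_add_eq', ← Derivation.commutator_apply (R := ℝ), h]

end TotalDerivative

section Momentum

open Finset

variable {n : ℕ}

theorem Derivation.sum_range_succ_smul_iterate {R A : Type*} [CommSemiring R] [CommSemiring A]
    [Algebra R A] (D : Derivation R A A) (c : ℕ → R) (g : ℕ → A) (N : ℕ) :
    ∑ t ∈ range (N + 1), c t • (⇑D)^[t] (g t)
      = c 0 • g 0 + D (∑ t ∈ range N, c (t + 1) • (⇑D)^[t] (g (t + 1))) := by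
  simp only [sum_range_succ', map_sum, D.map_smul, ← Function.iterate_succ_apply' D,
    Function.iterate_zero_apply, add_comm]

theorem pmom_eq_sum_range {f : DP n} {N : ℕ} (h : vbound f ≤ N) (i : Fin n) (α s : ℕ) :
    pmom i α s f = ∑ t ∈ range N, ((-1 : ℝ) ^ t * (Nat.choose (t + s) s : ℝ)) •
      (⇑(totalDeriv n))^[t] (pderiv (i, α + s + t) f) := by
  rw [pmom, ← coe_totalDeriv]
  refine sum_subset (range_subset_range.2 h) fun t _ ht => ?_
  rw [pderiv_eq_zero_of_vbound_le_s19 (by simp at ht; omega), iterate_map_zero, smul_zero]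

theorem pmom_eq_zero_of_vbound_le {f : DP n} {α : ℕ} (h : vbound f ≤ α) (i : Fin n)
    (s : ℕ) :
    pmom i α s f = 0 :=
  sum_eq_zero fun t _ => by
    rw [← coe_totalDeriv, pderiv_eq_zero_of_vbound_le_s19 (by omega), iterate_map_zero, smul_zero]

theorem pmom_zero_eq (i : Fin n) (α : ℕ) (f : DP n) :
    pmom i α 0 f = pderiv (i, α) f - totalDeriv n (pmom i (α + 1) 0 f) := by
  rw [pmom_eq_sum_range (Nat.le_succ _), Derivation.sum_range_succ_smul_iterate,
    pmom_eq_sum_range le_rfl, sub_eq_add_neg, ← map_neg, ← sum_neg_distrib]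
  simp [pow_succ, add_assoc, add_comm 1]

theorem pmom_succ_eq (i : Fin n) (α s : ℕ) (f : DP n) :
    pmom i α (s + 1) f = pmom i (α + 1) s f - totalDeriv n (pmom i (α + 1) (s + 1) f) := by
  have pascal : ∀ t, (-1 : ℝ) ^ t * ((t + (s + 1)).choose (s + 1) : ℝ)
      = (-1) ^ t * ((t + s).choose s : ℝ) + (-1) ^ t * ((t + s).choose (s + 1) : ℝ) := by
    intro t
    rw [← add_assoc, Nat.choose_succ_succ]
    push_cast
    ring
  rw [pmom_eq_sum_range (Nat.le_succ _), pmom_eq_sum_range (Nat.le_succ _),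
    pmom_eq_sum_range le_rfl]
  conv_lhs => simp only [pascal, add_smul, sum_add_distrib]
  rw [sub_eq_add_neg]
  congr 1
  · exact sum_congr rfl fun t _ => by rw [show α + (s + 1) + t = α + 1 + s + t by omega]
  · rw [Derivation.sum_range_succ_smul_iterate, zero_add, Nat.choose_eq_zero_of_lt s.lt_succ_self,
      Nat.cast_zero, mul_zero, zero_smul, zero_add, ← map_neg, ← sum_neg_distrib]
    refine congrArg _ (sum_congr rfl fun t _ => ?_)
    rw [show α + (s + 1) + (t + 1) = α + 1 + (s + 1) + t by omega,
      show t + 1 + s = t + (s + 1) by omega, ← neg_smul, pow_succ]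
    congr 1
    ring

theorem totalDeriv_pmom_succ_zero (i : Fin n) (α : ℕ) (f : DP n) :
    totalDeriv n (pmom i (α + 1) 0 f) = pderiv (i, α) f - pmom i α 0 f := by
  rw [pmom_zero_eq i α f, sub_sub_cancel]

end Momentum

open Filter in
theorem Nat.decreasing_induction_of_eventually {P : ℕ → Prop} (h : ∀ n, P (n + 1) → P n)
    (hP : ∀ᶠ n in atTop, P n) (n : ℕ) : P n :=
  Nat.decreasing_induction_of_not_bddAbove h (fun ⟨b, hb⟩ =>
    let ⟨_, hm, hbm⟩ := (hP.and (eventually_gt_atTop b)).exists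
    hbm.not_ge (hb hm)) n

section VariationalDerivative

open Filter

variable {n : ℕ}

theorem pmom_succ_pmom_zero_zero (i j : Fin n) (f : DP n) (s β : ℕ) :
    pmom i (β + 1) s (pmom j 0 0 f) = (-1 : ℝ) ^ s •
      (pderiv (j, s) (pmom i (β + 1) 0 f) - pderiv (i, β) (pmom j (s + 1) 0 f)) := by
  have large : ∀ s, ∀ᶠ β in atTop, pmom i (β + 1) s (pmom j 0 0 f) = (-1 : ℝ) ^ s •
      (pderiv (j, s) (pmom i (β + 1) 0 f) - pderiv (i, β) (pmom j (s + 1) 0 f)) :=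
    fun s => by
      filter_upwards [eventually_ge_atTop (vbound (pmom j 0 0 f)), eventually_ge_atTop (vbound f),
        eventually_ge_atTop (vbound (pmom j (s + 1) 0 f))] with β hδ hf hq
      rw [pmom_eq_zero_of_vbound_le (by omega),
        pmom_eq_zero_of_vbound_le (by omega : vbound f ≤ β + 1), pderiv_eq_zero_of_vbound_le_s19 hq,
        map_zero, sub_zero, smul_zero]
  induction s generalizing β with
  | zero =>
    refine Nat.decreasing_induction_of_eventually (fun β ih => ?_) (large 0) β
    rw [pmom_zero_eq i (β + 1), ih]
    simp only [pow_zero, one_smul, map_sub, totalDeriv_pderiv_zero, totalDeriv_pderiv_succ,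
      totalDeriv_pmom_succ_zero]
    rw [pderiv_pderiv_comm (j, 0)]
    abel
  | succ s ih =>
    refine Nat.decreasing_induction_of_eventually (fun β ihβ => ?_) (large (s + 1)) β
    rw [pmom_succ_eq i (β + 1) s, ih (β + 1), ihβ]
    simp only [map_sub, Derivation.map_smul, totalDeriv_pderiv_succ, totalDeriv_pmom_succ_zero]
    rw [pderiv_pderiv_comm (j, s + 1)]
    module

end VariationalDerivative

section Energy

open Finset

variable {n : ℕ}

theorem Eop_eq_sum_product {f : DP n} {N : ℕ} (h : vbound f ≤ N) (s : ℕ) :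
    Eop s f = ∑ v ∈ univ ×ˢ range N, X (v.1, v.2 + 1) * pmom v.1 (v.2 + 1) s f := by
  rw [Eop, sum_product]
  refine sum_congr rfl fun i _ => ?_
  rw [range_eq_Ico, sum_Ico_add' (fun α => X (i, α) * pmom i α s f), zero_add,
    Ico_add_one_right_eq_Icc]
  refine sum_subset (Icc_subset_Icc_right h) fun α hα hα' => ?_
  rw [mem_Icc] at hα hα'
  rw [pmom_eq_zero_of_vbound_le (by omega), mul_zero]

theorem Eop_pmom_zero_zero_eq_sum {j : Fin n} {s : ℕ} {f : DP n} {N : ℕ}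
    (hδ : vbound (pmom j 0 0 f) ≤ N) (hq : vbound (pmom j (s + 1) 0 f) ≤ N) :
    Eop s (pmom j 0 0 f) = (-1 : ℝ) ^ s •
      (∑ v ∈ univ ×ˢ range N, X (v.1, v.2 + 1) * pderiv (j, s) (pmom v.1 (v.2 + 1) 0 f)
        - totalDeriv n (pmom j (s + 1) 0 f)) := by
  have hvars : (pmom j (s + 1) 0 f).vars ⊆ univ ×ˢ range N := fun v hv =>
    mem_product.2 ⟨mem_univ _, mem_range.2 ((lt_vbound_of_mem_vars hv).trans_le hq)⟩
  rw [Eop_eq_sum_product hδ, totalDeriv_eq_sum hvars, ← sum_sub_distrib, smul_sum]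
  refine sum_congr rfl fun v _ => ?_
  rw [pmom_succ_pmom_zero_zero, mul_smul_comm, mul_sub]

theorem pderiv_Eop_zero_eq_sum {f : DP n} {N : ℕ} (h : vbound f ≤ N) (w : Fin n × ℕ) :
    pderiv w (Eop 0 f)
      = ∑ v ∈ univ ×ˢ range N, pderiv w (X (v.1, v.2 + 1)) * pmom v.1 (v.2 + 1) 0 f
        + ∑ v ∈ univ ×ˢ range N, X (v.1, v.2 + 1) * pderiv w (pmom v.1 (v.2 + 1) 0 f) := by
  rw [Eop_eq_sum_product h, map_sum, ← sum_add_distrib]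
  simp only [pderiv_mul]

theorem Eop_zero_pmom_zero_zero (j : Fin n) (f : DP n) :
    Eop 0 (pmom j 0 0 f) = pderiv (j, 0) (Eop 0 f) - totalDeriv n (pmom j 1 0 f) := by
  let N := vbound f + vbound (pmom j 0 0 f) + vbound (pmom j 1 0 f)
  have hX : ∑ v ∈ univ ×ˢ range N,
      pderiv (j, 0) (X (v.1, v.2 + 1)) * pmom v.1 (v.2 + 1) 0 f = 0 :=
    sum_eq_zero fun v _ => by rw [pderiv_X_of_ne (by simp), zero_mul]
  rw [Eop_pmom_zero_zero_eq_sum (N := N) (by omega) (Nat.le_add_left _ _),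
    pderiv_Eop_zero_eq_sum (N := N) (by omega)]
  simp only [hX, zero_add, pow_zero, one_smul]

theorem Eop_succ_pmom_zero_zero (j : Fin n) (s : ℕ) (f : DP n) :
    Eop (s + 1) (pmom j 0 0 f) = (-1 : ℝ) ^ (s + 1) •
      (pderiv (j, s + 1) (Eop 0 f) - pmom j (s + 1) 0 f
        - totalDeriv n (pmom j (s + 1 + 1) 0 f)) := by
  let N := vbound f + vbound (pmom j 0 0 f) + vbound (pmom j (s + 1 + 1) 0 f) + s + 1
  have hX : ∑ v ∈ univ ×ˢ range N,
      pderiv (j, s + 1) (X (v.1, v.2 + 1)) * pmom v.1 (v.2 + 1) 0 f = pmom j (s + 1) 0 f := by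
    rw [sum_eq_single (j, s), pderiv_X_self, one_mul]
    · intro v _ hv
      rw [pderiv_X_of_ne (by simpa [Prod.ext_iff] using hv), zero_mul]
    · simp [N]
  rw [Eop_pmom_zero_zero_eq_sum (N := N) (by omega) (by omega),
    pderiv_Eop_zero_eq_sum (N := N) (by omega), hX, add_sub_cancel_left]

end Energy

/-- `E ∘ δ_j = ∂_{j,0} ∘ E` and, for `t ≥ 1`, `E_t ∘ δ_j = (-1)^t ∂_{j,t} ∘ E`. -/
theorem stmt19 {n : ℕ} (j : Fin n) :
    (∀ f : DP n, Ener (pmom j 0 0 f) = pderiv (j, 0) (Ener f)) ∧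
    (∀ t : ℕ, 1 ≤ t → ∀ f : DP n,
      Eop t (pmom j 0 0 f) = ((-1 : ℝ) ^ t) • pderiv (j, t) (Ener f)) := by
  refine ⟨fun f => ?_, fun t ht f => ?_⟩
  · rw [Ener, Ener, Eop_zero_pmom_zero_zero, map_sub, pmom_zero_eq j 0 f]
    abel
  · obtain ⟨s, rfl⟩ : ∃ s, t = s + 1 := ⟨t - 1, by omega⟩
    rw [Eop_succ_pmom_zero_zero, Ener, map_sub, pmom_zero_eq j (s + 1) f]
    congr 1
    abel
end
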